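/- Let (x, X, y, Y₁₂, α) ∈ ℝ² × Sym₂(ℝ) × ℝ² × ℝ × ℝ² with α₁ = 0 and X₁₁ ≤ x₁. If the PSD condition (P5) holds, then the PSD condition (P4b) holds. -/

import Mathlib

open Matrix

set_option linter.unusedVariables false

/-- Linear conditions (L). -/
def Lcond (x1 x2 X11 X12 X22 y1 y2 Y12 a1 a2 : ℝ) : Prop :=
  X11 ≤ x1 ∧ x1 ≤ y1 ∧ X22 ≤ x2 ∧ x2 ≤ y2 ∧
  max 0 (x1 - a1 + x2 - a2 - Y12) ≤ X12 ∧ X12 ≤ min (x1 - a1) (x2 - a2) ∧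
  0 ≤ a1 ∧ a1 ≤ y1 - Y12 ∧ 0 ≤ a2 ∧ a2 ≤ y2 - Y12 ∧
  max 0 (y1 + y2 - 1) ≤ Y12 ∧ Y12 ≤ min y1 y2

/-- PSD condition (P3). -/
def P3cond (x1 x2 X11 X12 X22 y1 y2 Y12 a1 a2 : ℝ) : Prop :=
  (!![Y12, x1 - a1, x2 - a2;
      x1 - a1, x1 - a1, X12;
      x2 - a2, X12, x2 - a2] : Matrix (Fin 3) (Fin 3) ℝ).PosSemidef

/-- PSD condition (P4a). -/
def P4acond (x1 x2 X11 X12 X22 y1 y2 Y12 a1 a2 : ℝ) : Prop :=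
  (!![y1 - Y12, 0, a1, 0;
      0, Y12, x1 - a1, x2 - a2;
      a1, x1 - a1, X11, X12;
      0, x2 - a2, X12, x2 - a2] : Matrix (Fin 4) (Fin 4) ℝ).PosSemidef

/-- PSD condition (P4b). -/
def P4bcond (x1 x2 X11 X12 X22 y1 y2 Y12 a1 a2 : ℝ) : Prop :=
  (!![y2 - Y12, 0, 0, a2;
      0, Y12, x1 - a1, x2 - a2;
      0, x1 - a1, x1 - a1, X12;
      a2, x2 - a2, X12, X22] : Matrix (Fin 4) (Fin 4) ℝ).PosSemidef

/-- PSD condition (P5). -/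
def P5cond (x1 x2 X11 X12 X22 y1 y2 Y12 a1 a2 : ℝ) : Prop :=
  (!![y1 - Y12, 0, 0, a1, 0;
      0, y2 - Y12, 0, 0, a2;
      0, 0, Y12, x1 - a1, x2 - a2;
      a1, 0, x1 - a1, X11, X12;
      0, a2, x2 - a2, X12, X22] : Matrix (Fin 5) (Fin 5) ℝ).PosSemidef

lemma P4b_matrix_eq_submatrix_P5_add (x1 x2 X11 X12 X22 y1 y2 Y12 a1 a2 : ℝ) :
    !![y2 - Y12, 0, 0, a2;
      0, Y12, x1 - a1, x2 - a2;
      0, x1 - a1, x1 - a1, X12;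
      a2, x2 - a2, X12, X22] =
    (!![y1 - Y12, 0, 0, a1, 0;
      0, y2 - Y12, 0, 0, a2;
      0, 0, Y12, x1 - a1, x2 - a2;
      a1, 0, x1 - a1, X11, X12;
      0, a2, x2 - a2, X12, X22] : Matrix (Fin 5) (Fin 5) ℝ).submatrix Fin.succ Fin.succ +
    diagonal (Pi.single 2 (x1 - a1 - X11)) := by
  ext i j
  fin_cases i <;> fin_cases j <;> simp

lemma P4bcond_of_P5cond {x1 x2 X11 X12 X22 y1 y2 Y12 a1 a2 : ℝ} (hX : X11 ≤ x1 - a1)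
    (hP5 : P5cond x1 x2 X11 X12 X22 y1 y2 Y12 a1 a2) :
    P4bcond x1 x2 X11 X12 X22 y1 y2 Y12 a1 a2 := by
  rw [P4bcond, P4b_matrix_eq_submatrix_P5_add x1 x2 X11 X12 X22 y1]
  exact (hP5.submatrix Fin.succ).add (.diagonal (Pi.single_nonneg.2 (sub_nonneg.2 hX)))

/-- If α₁ = 0 and X₁₁ ≤ x₁, then (P5) implies (P4b). -/
theorem stmt17 (x1 x2 X11 X12 X22 y1 y2 Y12 a2 : ℝ) (hX : X11 ≤ x1)
    (hP5 : P5cond x1 x2 X11 X12 X22 y1 y2 Y12 0 a2) :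
    P4bcond x1 x2 X11 X12 X22 y1 y2 Y12 0 a2 :=
  P4bcond_of_P5cond (by rwa [sub_zero]) hP5
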